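/- Let A, B be positive definite n×n complex matrices with A ≤ B in the Loewner order. Then for all a, b ∈ (0,1] and all t ∈ [0,1], in the Loewner order, T_{(1−t)a + tb}(A|B) ≤ (1−t)·T_a(A|B) + t·T_b(A|B). -/

import Mathlib

open Matrix ComplexOrder

/-- Real power of a (Hermitian) matrix via the continuous functional calculus. -/
noncomputable def mrpow {n : ℕ} (A : Matrix (Fin n) (Fin n) ℂ) (t : ℝ) :
    Matrix (Fin n) (Fin n) ℂ :=
  cfc (fun x : ℝ => x ^ t) A

/-- The weighted geometric mean `A ♯_t B = A^{1/2} (A^{-1/2} B A^{-1/2})^t A^{1/2}`. -/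
noncomputable def geomMean {n : ℕ} (A B : Matrix (Fin n) (Fin n) ℂ) (t : ℝ) :
    Matrix (Fin n) (Fin n) ℂ :=
  mrpow A (1 / 2) * mrpow (mrpow A (-(1 / 2)) * B * mrpow A (-(1 / 2))) t * mrpow A (1 / 2)

/-- The Tsallis relative operator entropy `T_s(A|B) = (A ♯_s B - A)/s`. -/
noncomputable def tsallis {n : ℕ} (A B : Matrix (Fin n) (Fin n) ℂ) (s : ℝ) :
    Matrix (Fin n) (Fin n) ℂ :=
  s⁻¹ • (geomMean A B s - A)

/-! Put `C = A^{-1/2} B A^{-1/2}` and `f_s(x) = (x^s - 1)/s`. Then `T_s(A|B) = A^{1/2} f_s(C) A^{1/2}`,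
and `A ≤ B` gives `C ≥ 1`. For `x ≥ 1`, `f_s(x) = ∫_1^x y^{s-1} dy` is convex in `s > 0` because each
`y^{s-1}` is. The functional calculus is monotone and conjugation by `A^{1/2}` preserves the Loewner
order, so `s ↦ T_s(A|B)` is convex on `(0, ∞)` in the Loewner order. -/

open scoped MatrixOrder
open Set

lemma inv_mul_rpow_sub_one_eq_integral {s : ℝ} (hs : 0 < s) (x : ℝ) :
    s⁻¹ * (x ^ s - 1) = ∫ y in (1 : ℝ)..x, y ^ (s - 1) := by
  rw [integral_rpow (Or.inl (by linarith)), sub_add_cancel, Real.one_rpow]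
  field_simp

lemma convexOn_rpow_left_sub_one {y : ℝ} (hy : 0 < y) :
    ConvexOn ℝ univ fun s : ℝ => y ^ (s - 1) := by
  simpa [Real.rpow_sub_one hy.ne', div_eq_inv_mul] using
    (convexOn_rpow_left hy).smul (inv_nonneg.2 hy.le)

theorem convexOn_inv_mul_rpow_sub_one {x : ℝ} (hx : 1 ≤ x) :
    ConvexOn ℝ (Ioi 0) fun s : ℝ => s⁻¹ * (x ^ s - 1) := by
  refine ConvexOn.congr ?_ fun s hs => (inv_mul_rpow_sub_one_eq_integral hs x).symm
  simp_rw [intervalIntegral.integral_of_le hx]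
  refine MeasureTheory.integral_convexOn_of_integrand_ae (convex_Ioi 0) ?_ ?_
  · refine (MeasureTheory.ae_restrict_iff' measurableSet_Ioc).2 (.of_forall fun y hy => ?_)
    exact (convexOn_rpow_left_sub_one (by linarith [hy.1])).subset (subset_univ _) (convex_Ioi 0)
  · intro s hs
    exact (intervalIntegral.intervalIntegrable_rpow' (by linarith [mem_Ioi.1 hs])).1

section CFC

variable {A : Type*} [PartialOrder A] [Ring A] [StarRing A] [StarOrderedRing A] [Algebra ℝ A]

theorem ConvexOn.conjugate {E : Type*} [AddCommMonoid E] [Module ℝ E] {I : Set E}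
    {f : E → A} (hf : ConvexOn ℝ I f) {c : A} (hc : IsSelfAdjoint c) :
    ConvexOn ℝ I fun s => c * f s * c := by
  refine ⟨hf.1, fun s hs r hr p q hp hq hpq => ?_⟩
  simpa only [mul_add, add_mul, mul_smul_comm, smul_mul_assoc] using
    hc.conjugate_le_conjugate (hf.2 hs hr hp hq hpq)

variable [TopologicalSpace A] [ContinuousFunctionalCalculus ℝ A IsSelfAdjoint]

theorem convexOn_cfc {I : Set ℝ} {f : ℝ → ℝ → ℝ} {a : A} (hI : Convex ℝ I)
    (hf : ∀ x ∈ spectrum ℝ a, ConvexOn ℝ I (f · x))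
    (hcont : ∀ s ∈ I, ContinuousOn (f s) (spectrum ℝ a)) :
    ConvexOn ℝ I fun s => cfc (f s) a := by
  refine ⟨hI, fun s hs r hr p q hp hq hpq => ?_⟩
  rw [← cfc_smul p (f s) a (hcont s hs), ← cfc_smul q (f r) a (hcont r hr),
    ← cfc_add a (fun x => p • f s x) (fun x => q • f r x) ((hcont s hs).const_smul p)
      ((hcont r hr).const_smul q)]
  exact cfc_mono (fun x hx => (hf x hx).2 hs hr hp hq hpq) (hcont _ (hI hs hr hp hq hpq))
    (((hcont s hs).const_smul p).add ((hcont r hr).const_smul q))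

end CFC

section Matrix

variable {n : ℕ} {A B : Matrix (Fin n) (Fin n) ℂ}

lemma mrpow_eq_rpow (hA : A.PosSemidef) (r : ℝ) : mrpow A r = A ^ r :=
  (CFC.rpow_eq_cfc_real hA.nonneg).symm

noncomputable def invSqrtConj (A B : Matrix (Fin n) (Fin n) ℂ) : Matrix (Fin n) (Fin n) ℂ :=
  A ^ (-(1 / 2) : ℝ) * B * A ^ (-(1 / 2) : ℝ)

lemma isSelfAdjoint_rpow (A : Matrix (Fin n) (Fin n) ℂ) (r : ℝ) : IsSelfAdjoint (A ^ r) :=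
  IsSelfAdjoint.of_nonneg CFC.rpow_nonneg

lemma isSelfAdjoint_invSqrtConj (hB : IsSelfAdjoint B) : IsSelfAdjoint (invSqrtConj A B) := by
  unfold invSqrtConj
  nth_rw 2 [← (isSelfAdjoint_rpow A _).star_eq]
  exact hB.conjugate _

lemma one_le_invSqrtConj (hA : A.PosDef) (hAB : A ≤ B) : 1 ≤ invSqrtConj A B := by
  have hA' := hA.isStrictlyPositive
  calc 1 = A ^ (-(1 / 2) : ℝ) * A ^ (1 : ℝ) * A ^ (-(1 / 2) : ℝ) := by
        rw [← CFC.rpow_add hA'.isUnit, ← CFC.rpow_add hA'.isUnit]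
        norm_num [CFC.rpow_zero A]
    _ ≤ invSqrtConj A B := by
        rw [CFC.rpow_one A]
        exact (isSelfAdjoint_rpow A _).conjugate_le_conjugate hAB

lemma tsallis_eq_conjugate_cfc (hA : A.PosDef) (hB : IsSelfAdjoint B) {s : ℝ} (hs : 0 ≤ s) :
    tsallis A B s = A ^ (1 / 2 : ℝ) * cfc (fun x : ℝ => s⁻¹ * (x ^ s - 1)) (invSqrtConj A B) *
      A ^ (1 / 2 : ℝ) := by
  have hcont : Continuous fun x : ℝ => x ^ s := Real.continuous_rpow_const hs
  have hsqrt : A ^ (1 / 2 : ℝ) * A ^ (1 / 2 : ℝ) = A := by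
    rw [← CFC.rpow_add hA.isStrictlyPositive.isUnit, add_halves, CFC.rpow_one A]
  rw [cfc_const_mul s⁻¹ (fun x => x ^ s - 1) _ (hcont.sub continuous_const).continuousOn,
    cfc_sub (fun x => x ^ s) (fun _ => 1) _ hcont.continuousOn,
    cfc_const_one ℝ _ (isSelfAdjoint_invSqrtConj hB)]
  simp only [tsallis, geomMean, mrpow_eq_rpow hA.posSemidef]
  rw [mul_smul_comm, smul_mul_assoc, mul_sub, sub_mul, mul_one, hsqrt]
  rfl

theorem convexOn_tsallis (hA : A.PosDef) (hAB : A ≤ B) : ConvexOn ℝ (Ioi 0) (tsallis A B) := by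
  have hB : IsSelfAdjoint B := IsSelfAdjoint.of_nonneg (hA.posSemidef.nonneg.trans hAB)
  have hC : ∀ x ∈ spectrum ℝ (invSqrtConj A B), 1 ≤ x :=
    (CFC.one_le_iff _ (isSelfAdjoint_invSqrtConj hB)).1 (one_le_invSqrtConj hA hAB)
  refine ((convexOn_cfc (convex_Ioi 0) (fun x hx => convexOn_inv_mul_rpow_sub_one (hC x hx))
    fun s hs => ?_).conjugate (isSelfAdjoint_rpow A _)).congr
    fun s hs => (tsallis_eq_conjugate_cfc hA hB hs.le).symm
  exact (continuous_const.mul ((Real.continuous_rpow_const hs.le).sub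
    continuous_const)).continuousOn

end Matrix

theorem stmt15 (n : ℕ) (A B : Matrix (Fin n) (Fin n) ℂ) (hA : A.PosDef)
    (hAB : (B - A).PosSemidef)
    (a b : ℝ) (ha : a ∈ Set.Ioc (0 : ℝ) 1) (hb : b ∈ Set.Ioc (0 : ℝ) 1)
    (t : ℝ) (ht : t ∈ Set.Icc (0 : ℝ) 1) :
    ((1 - t) • tsallis A B a + t • tsallis A B b -
      tsallis A B ((1 - t) * a + t * b)).PosSemidef := by
  have h := (convexOn_tsallis hA (Matrix.le_iff.2 hAB)).2 ha.1 hb.1 (sub_nonneg.2 ht.2) ht.1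
    (sub_add_cancel 1 t)
  rw [← Matrix.nonneg_iff_posSemidef, sub_nonneg]
  simpa only [smul_eq_mul] using h
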